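/- arXiv:math/0605395 — 2 statements merged into one kernel-verified Lean document; each statement's English description precedes it below -/
import Mathlib

section
/- Let η ∈ D_r with k(η) ≥ 1 and suppose e^{2a(n)} = c n^{−d/k(η)} for a fixed constant c > 0, with b a fixed real. Let R ≥ r be an integer and ζ ∈ D_R a local configuration of radius R. Then there exists a constant M_1 > 0 such that for all admissible n, all vertices x ∈ V_n and all configurations σ ∈ X_n, n^d · μ_{a(n),b}(I_x^ζ = 1 | σ_{δB(x,R)}) ≤ M_1 e^{2a(n)(k(ζ) − k(η))}. -/
open scoped ENNReal BigOperators
open Filter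

namespace Ising

noncomputable section

/-- The `L_p` norm (`1 ≤ p ≤ ∞`) of an integer vector, via the `PiLp` norm on `ℝ^d`. -/
def lpNorm (p : ℝ≥0∞) [Fact (1 ≤ p)] {d : ℕ} (z : Fin d → ℤ) : ℝ :=
  ‖(WithLp.equiv p (Fin d → ℝ)).symm (fun i => (z i : ℝ))‖

lemma lpNorm_neg (p : ℝ≥0∞) [Fact (1 ≤ p)] {d : ℕ} (z : Fin d → ℤ) :
    lpNorm p (fun i => -(z i)) = lpNorm p z := by
  unfold lpNorm
  have h : ((WithLp.equiv p (Fin d → ℝ)).symm (fun i => ((-(z i) : ℤ) : ℝ)))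
      = -((WithLp.equiv p (Fin d → ℝ)).symm fun i => ((z i : ℤ) : ℝ)) := by
    have : (fun i => ((-(z i) : ℤ) : ℝ)) = -(fun i => ((z i : ℤ) : ℝ)) := by
      funext i; simp
    rw [this]; rfl
  rw [h, norm_neg]

/-- Vertex set of the `d`-dimensional lattice torus of size `n`:
`{0, …, n-1}^d` with componentwise arithmetic modulo `n`. -/
abbrev Vtx (d n : ℕ) := Fin d → ZMod n

/-- Configurations: a spin (`true` = `+1`, `false` = `-1`) at each vertex. -/
abbrev Conf (d n : ℕ) := Vtx d n → Bool

/-- The spin value (`±1`) of a Boolean. -/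
def spin (s : Bool) : ℝ := if s then 1 else -1

/-- The lattice torus `G_n`: distinct vertices `x, y` are adjacent iff `y - x`
(componentwise modulo `n`) admits an integer representative `z` with `‖z‖_p ≤ ρ`. -/
def torus (d ρ : ℕ) (p : ℝ≥0∞) [Fact (1 ≤ p)] (n : ℕ) : SimpleGraph (Vtx d n) where
  Adj x y := x ≠ y ∧ ∃ z : Fin d → ℤ,
    (∀ i, ((z i : ZMod n) = y i - x i)) ∧ lpNorm p z ≤ (ρ : ℝ)
  symm := by
    constructor
    rintro x y ⟨hxy, z, hz, hn⟩
    refine ⟨hxy.symm, fun i => -(z i), fun i => ?_, by rw [lpNorm_neg]; exact hn⟩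
    push_cast
    rw [hz i]; ring
  loopless := ⟨fun x h => h.1 rfl⟩

/-- The corresponding (infinite) lattice graph on `ℤ^d`, used as a reference to define
local configurations: distinct `x, y` are adjacent iff `‖y - x‖_p ≤ ρ`. -/
def latticeZ (d ρ : ℕ) (p : ℝ≥0∞) [Fact (1 ≤ p)] : SimpleGraph (Fin d → ℤ) where
  Adj x y := x ≠ y ∧ lpNorm p (fun i => y i - x i) ≤ (ρ : ℝ)
  symm := by
    constructor
    rintro x y ⟨hxy, hn⟩
    refine ⟨hxy.symm, ?_⟩
    have h : (fun i => x i - y i) = (fun i => -(y i - x i)) := by funext i; ring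
    rw [h, lpNorm_neg]; exact hn
  loopless := ⟨fun x h => h.1 rfl⟩

/-- The ball `B(x,r)` of center `x` and radius `r` for the graph distance. -/
def gball {V : Type*} (G : SimpleGraph V) (x : V) (r : ℕ) : Set V :=
  {y | G.Reachable x y ∧ G.dist x y ≤ r}

/-- The reference ball `B(0,r)` (in `ℤ^d`). -/
def refBall (d ρ : ℕ) (p : ℝ≥0∞) [Fact (1 ≤ p)] (r : ℕ) : Set (Fin d → ℤ) :=
  gball (latticeZ d ρ p) 0 r

/-- A local configuration of radius `r`: an element of `D_r = {-1,+1}^{B(0,r)}`. -/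
abbrev LocalConfig (d ρ : ℕ) (p : ℝ≥0∞) [Fact (1 ≤ p)] (r : ℕ) :=
  ↥(refBall d ρ p r) → Bool

/-- `k(η)`: the number of positive vertices of a local configuration `η`. -/
def kOf (d ρ : ℕ) (p : ℝ≥0∞) [Fact (1 ≤ p)] (r : ℕ) (η : LocalConfig d ρ p r) : ℕ :=
  Set.ncard {v : ↥(refBall d ρ p r) | η v = true}

/-- The common degree of the vertices (number of neighbors of `0` in the lattice). -/
def degZ (d ρ : ℕ) (p : ℝ≥0∞) [Fact (1 ≤ p)] : ℕ :=
  Set.ncard {z : Fin d → ℤ | (latticeZ d ρ p).Adj 0 z}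

/-- The perimeter `γ(η) = V·k(η) - 2·#{edges with both endpoints positive}`; the
number of ordered adjacent pairs of positive vertices is twice the number of such edges. -/
def perim (d ρ : ℕ) (p : ℝ≥0∞) [Fact (1 ≤ p)] (r : ℕ) (η : LocalConfig d ρ p r) : ℕ :=
  degZ d ρ p * kOf d ρ p r η -
    Set.ncard {q : ↥(refBall d ρ p r) × ↥(refBall d ρ p r) |
      (latticeZ d ρ p).Adj q.1.1 q.2.1 ∧ η q.1 = true ∧ η q.2 = true}

/-- `η` is clean if every vertex at graph distance exactly `r` from `0` is negative. -/
def Clean (d ρ : ℕ) (p : ℝ≥0∞) [Fact (1 ≤ p)] (r : ℕ) (η : LocalConfig d ρ p r) : Prop :=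
  ∀ v : ↥(refBall d ρ p r), (latticeZ d ρ p).dist 0 v.1 = r → η v = false

/-- The translate `η_x` of `η` occurs at `x` in the configuration `σ`. -/
def occursAt (d ρ : ℕ) (p : ℝ≥0∞) [Fact (1 ≤ p)] (r n : ℕ) (η : LocalConfig d ρ p r)
    (x : Vtx d n) (σ : Conf d n) : Prop :=
  ∀ v : ↥(refBall d ρ p r), σ (x + fun i => ((v.1 i : ZMod n))) = η v

/-- The indicator `I_x^η` (as a real number). -/
def occInd (d ρ : ℕ) (p : ℝ≥0∞) [Fact (1 ≤ p)] (r n : ℕ) (η : LocalConfig d ρ p r)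
    (x : Vtx d n) (σ : Conf d n) : ℝ := by
  classical exact if occursAt d ρ p r n η x σ then 1 else 0

/-- `X_n(η) = Σ_x I_x^η`: the number of copies of `η` in `G_n`. -/
def Xcount (d ρ : ℕ) (p : ℝ≥0∞) [Fact (1 ≤ p)] (r n : ℕ) (η : LocalConfig d ρ p r)
    (σ : Conf d n) : ℕ :=
  Set.ncard {x : Vtx d n | occursAt d ρ p r n η x σ}

/-- The interaction term `Σ_{{x,y} ∈ E_n} σ(x)σ(y)`. -/
def pairSum (d ρ : ℕ) (p : ℝ≥0∞) [Fact (1 ≤ p)] (n : ℕ) (σ : Conf d n) : ℝ :=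
  ∑' e : ↥(torus d ρ p n).edgeSet,
    Sym2.lift ⟨fun x y => spin (σ x) * spin (σ y), fun _ _ => mul_comm _ _⟩
      (e : Sym2 (Vtx d n))

/-- The Hamiltonian `a Σ_x σ(x) + b Σ_{{x,y} ∈ E_n} σ(x)σ(y)`. -/
def hamiltonian (d ρ : ℕ) (p : ℝ≥0∞) [Fact (1 ≤ p)] (n : ℕ) (a b : ℝ) (σ : Conf d n) : ℝ :=
  a * (∑' x : Vtx d n, spin (σ x)) + b * pairSum d ρ p n σ

/-- The (unnormalized) Gibbs weight of a configuration. -/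
def weight (d ρ : ℕ) (p : ℝ≥0∞) [Fact (1 ≤ p)] (n : ℕ) (a b : ℝ) (σ : Conf d n) : ℝ :=
  Real.exp (hamiltonian d ρ p n a b σ)

/-- The partition function `Z_{a,b}`. -/
def partZ (d ρ : ℕ) (p : ℝ≥0∞) [Fact (1 ≤ p)] (n : ℕ) (a b : ℝ) : ℝ :=
  ∑' σ : Conf d n, weight d ρ p n a b σ

/-- The Ising (Gibbs) probability `μ_{a,b}(A)` of an event `A ⊆ X_n`. -/
def prob (d ρ : ℕ) (p : ℝ≥0∞) [Fact (1 ≤ p)] (n : ℕ) (a b : ℝ) (A : Set (Conf d n)) : ℝ :=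
  (∑' σ : ↥A, weight d ρ p n a b (σ : Conf d n)) / partZ d ρ p n a b

/-- The expectation `E_{a,b}[f]`. -/
def expect (d ρ : ℕ) (p : ℝ≥0∞) [Fact (1 ≤ p)] (n : ℕ) (a b : ℝ) (f : Conf d n → ℝ) : ℝ :=
  (∑' σ : Conf d n, weight d ρ p n a b σ * f σ) / partZ d ρ p n a b

/-- The variance `Var_{a,b}[f]`. -/
def varE (d ρ : ℕ) (p : ℝ≥0∞) [Fact (1 ≤ p)] (n : ℕ) (a b : ℝ) (f : Conf d n → ℝ) : ℝ :=
  expect d ρ p n a b (fun σ => (f σ - expect d ρ p n a b f) ^ 2)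

/-- The event `{I_x^η = 1}`. -/
def event (d ρ : ℕ) (p : ℝ≥0∞) [Fact (1 ≤ p)] (r n : ℕ) (η : LocalConfig d ρ p r)
    (x : Vtx d n) : Set (Conf d n) :=
  {σ | occursAt d ρ p r n η x σ}

/-- The event that a configuration agrees with `σ₀` on `W`. -/
def agreeOn (d n : ℕ) (W : Set (Vtx d n)) (σ₀ : Conf d n) : Set (Conf d n) :=
  {τ | ∀ x ∈ W, τ x = σ₀ x}

/-- The conditional probability `μ_{a,b}(A | σ₀ on W)`. -/
def condProb (d ρ : ℕ) (p : ℝ≥0∞) [Fact (1 ≤ p)] (n : ℕ) (a b : ℝ) (A : Set (Conf d n))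
    (W : Set (Vtx d n)) (σ₀ : Conf d n) : ℝ :=
  prob d ρ p n a b (A ∩ agreeOn d n W σ₀) / prob d ρ p n a b (agreeOn d n W σ₀)

/-- The exterior boundary `δV` of a set of vertices of the torus. -/
def boundary (d ρ : ℕ) (p : ℝ≥0∞) [Fact (1 ≤ p)] (n : ℕ) (V : Set (Vtx d n)) :
    Set (Vtx d n) :=
  {y | y ∉ V ∧ ∃ x ∈ V, (torus d ρ p n).Adj x y}

/-- The ball `B(x,R)` in the torus. -/
def tball (d ρ : ℕ) (p : ℝ≥0∞) [Fact (1 ≤ p)] (n : ℕ) (x : Vtx d n) (R : ℕ) :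
    Set (Vtx d n) :=
  gball (torus d ρ p n) x R

/-- The distribution (probability mass function on `ℕ`) of an integer-valued observable. -/
def lawOf (d ρ : ℕ) (p : ℝ≥0∞) [Fact (1 ≤ p)] (n : ℕ) (a b : ℝ) (X : Conf d n → ℕ) :
    ℕ → ℝ :=
  fun m => prob d ρ p n a b {σ | X σ = m}

/-- The distribution on `ℕ` of a real-valued (integer-valued in fact) observable. -/
def lawR (d ρ : ℕ) (p : ℝ≥0∞) [Fact (1 ≤ p)] (n : ℕ) (a b : ℝ) (X : Conf d n → ℝ) :
    ℕ → ℝ :=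
  fun m => prob d ρ p n a b {σ | X σ = (m : ℝ)}

/-- The Poisson distribution with parameter `θ`, as a pmf on `ℕ`. -/
def poissonPMF (θ : ℝ) : ℕ → ℝ :=
  fun m => Real.exp (-θ) * θ ^ m / (Nat.factorial m : ℝ)

/-- Total variation distance between two distributions on `ℕ`:
`d_TV(μ,ν) = sup_A |μ(A) - ν(A)|`. -/
def dTV (f g : ℕ → ℝ) : ℝ :=
  ⨆ A : Set ℕ, |(∑' m : ↥A, f (m : ℕ)) - ∑' m : ↥A, g (m : ℕ)|

/-- The clean extension `η̊ ∈ D_{r+1}` of `η ∈ D_r`: it agrees with `η` on `B(0,r)` and is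
negative at every vertex at distance exactly `r+1` from `0`. -/
def ringExt (d ρ : ℕ) (p : ℝ≥0∞) [Fact (1 ≤ p)] (r : ℕ) (η : LocalConfig d ρ p r) :
    LocalConfig d ρ p (r + 1) := by
  classical exact fun v => if h : v.1 ∈ refBall d ρ p r then η ⟨v.1, h⟩ else false

/-- `D_r(η) = {η' ∈ D_r : V_+(η') ⊇ V_+(η)}`. -/
def Dfam (d ρ : ℕ) (p : ℝ≥0∞) [Fact (1 ≤ p)] (r : ℕ) (η : LocalConfig d ρ p r) :
    Set (LocalConfig d ρ p r) :=
  {η' | ∀ v, η v = true → η' v = true}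

/-- `Ī_x^η = Σ_{η' ∈ D_r(η)} I_x^{η'}`. -/
def barInd (d ρ : ℕ) (p : ℝ≥0∞) [Fact (1 ≤ p)] (r n : ℕ) (η : LocalConfig d ρ p r)
    (x : Vtx d n) (σ : Conf d n) : ℝ :=
  ∑' η' : ↥(Dfam d ρ p r η), occInd d ρ p r n (η' : LocalConfig d ρ p r) x σ

/-- `X̄_n(η) = Σ_x Ī_x^η`. -/
def Xbar (d ρ : ℕ) (p : ℝ≥0∞) [Fact (1 ≤ p)] (r n : ℕ) (η : LocalConfig d ρ p r)
    (σ : Conf d n) : ℝ :=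
  ∑' x : Vtx d n, barInd d ρ p r n η x σ

/-- The closed neighbourhood `B̄ = B ∪ δB` of a torus ball. -/
def cball (d ρ : ℕ) (p : ℝ≥0∞) [Fact (1 ≤ p)] (n : ℕ) (x : Vtx d n) (r : ℕ) :
    Set (Vtx d n) :=
  tball d ρ p n x r ∪ boundary d ρ p n (tball d ρ p n x r)

/-- One step of the connectivity relation between the balls of radius `r` centered at the
entries of a tuple: `B̄(x_i) ∩ B(x_j) ≠ ∅`. -/
def stepRel (d ρ : ℕ) (p : ℝ≥0∞) [Fact (1 ≤ p)] (n r : ℕ) {l : ℕ} (x : Fin l → Vtx d n)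
    (i j : Fin l) : Prop :=
  (cball d ρ p n (x i) r ∩ tball d ρ p n (x j) r).Nonempty

/-- The number of equivalence classes, for the connectivity relation, of the set of balls
`{B(x_1,r), …, B(x_l,r)}`. -/
def numClasses (d ρ : ℕ) (p : ℝ≥0∞) [Fact (1 ≤ p)] (n r : ℕ) {l : ℕ}
    (x : Fin l → Vtx d n) : ℕ :=
  Set.ncard (Set.range fun i : Fin l =>
    {j : Fin l | Relation.EqvGen (stepRel d ρ p n r x) i j})

/-- `C_l(s)`: the set of `l`-tuples of vertices whose set of balls of radius `r` is composed
of exactly `s` equivalence classes for the connectivity relation. -/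
def tupleClass (d ρ : ℕ) (p : ℝ≥0∞) [Fact (1 ≤ p)] (n r l s : ℕ) :
    Set (Fin l → Vtx d n) :=
  {x | numClasses d ρ p n r x = s}

/-!
Erasing the copy of `ζ` at `x` (setting its spins to `-1`) is injective on the event
`I_x^ζ = 1` and does not touch the boundary condition on `δB(x,R)`. It lowers the field term
of the Hamiltonian by exactly `2a·k(ζ)` and changes the interaction term only on the edges
meeting `B(x,R)`, whose number is bounded independently of `n`. Hence the conditional
probability is at most `C·e^{2a k(ζ)}`, and the scaling `e^{2a k(η)} = c^{k(η)} n^{-d}` absorbs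
the factor `n^d`.
-/

section LatticeGeometry

variable {d ρ : ℕ} {p : ℝ≥0∞} [Fact (1 ≤ p)]

lemma abs_le_of_lpNorm_le {z : Fin d → ℤ} (h : lpNorm p z ≤ ρ) (i : Fin d) :
    |z i| ≤ (ρ : ℤ) := by
  have hi := (PiLp.norm_apply_le ((WithLp.equiv p (Fin d → ℝ)).symm fun j => (z j : ℝ)) i).trans h
  rw [WithLp.equiv_symm_apply, PiLp.toLp_apply, Real.norm_eq_abs] at hi
  exact_mod_cast hi

lemma abs_sub_le_of_walk {u v : Fin d → ℤ} (w : (latticeZ d ρ p).Walk u v) (i : Fin d) :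
    |v i - u i| ≤ ρ * w.length := by
  induction w with
  | nil => simp
  | @cons u u' v hadj q ih =>
    rw [SimpleGraph.Walk.length_cons, Nat.cast_succ, mul_add_one]
    calc |v i - u i| ≤ |v i - u' i| + |u' i - u i| := abs_sub_le _ _ _
      _ ≤ ρ * q.length + ρ := add_le_add ih (abs_le_of_lpNorm_le hadj.2 i)

lemma abs_le_of_mem_refBall {R : ℕ} {v : Fin d → ℤ} (hv : v ∈ refBall d ρ p R) (i : Fin d) :
    |v i| ≤ ρ * R := by
  obtain ⟨hreach, hdist⟩ := hv
  obtain ⟨w, hw⟩ := hreach.exists_walk_length_eq_dist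
  have := abs_sub_le_of_walk w i
  rw [Pi.zero_apply, sub_zero, hw] at this
  exact this.trans (by gcongr)

lemma refBall_finite (R : ℕ) : (refBall d ρ p R).Finite :=
  (Set.Finite.pi fun _ => Set.finite_Icc (-(ρ * R : ℤ)) (ρ * R)).subset
    fun _ hv => Set.mem_univ_pi.2 fun i => abs_le.1 (abs_le_of_mem_refBall hv i)

noncomputable instance (R : ℕ) : Fintype (refBall d ρ p R) :=
  (refBall_finite R).fintype

end LatticeGeometry

section TorusGeometry

variable {d ρ : ℕ} {p : ℝ≥0∞} [Fact (1 ≤ p)] {n : ℕ}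

def place (x : Vtx d n) (v : Fin d → ℤ) : Vtx d n :=
  x + fun i => (v i : ZMod n)

lemma place_zero (x : Vtx d n) : place x 0 = x := by
  ext i
  simp [place]

lemma place_ne_place (x : Vtx d n) {u w : Fin d → ℤ} {i : Fin d} (hi : u i ≠ w i)
    (hlt : |w i - u i| < n) : place x u ≠ place x w := by
  intro h
  have hcast : ((w i - u i : ℤ) : ZMod n) = 0 := by
    rw [Int.cast_sub, sub_eq_zero]
    exact (congrFun (add_left_cancel h) i).symm
  exact sub_ne_zero.2 hi.symm
    (Int.eq_zero_of_abs_lt_dvd ((ZMod.intCast_zmod_eq_zero_iff_dvd _ n).1 hcast) hlt)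

lemma torus_adj_place (hρn : ρ < n) (x : Vtx d n) {u w : Fin d → ℤ}
    (h : (latticeZ d ρ p).Adj u w) : (torus d ρ p n).Adj (place x u) (place x w) := by
  obtain ⟨i, hi⟩ := Function.ne_iff.1 h.1
  refine ⟨place_ne_place x hi ((abs_le_of_lpNorm_le h.2 i).trans_lt (by exact_mod_cast hρn)),
    fun i => w i - u i, fun i => ?_, h.2⟩
  simp only [place, Pi.add_apply, Int.cast_sub]
  ring

lemma place_mem_tball (hρn : ρ < n) (x : Vtx d n) {R : ℕ} {v : Fin d → ℤ}
    (hv : v ∈ refBall d ρ p R) : place x v ∈ tball d ρ p n x R := by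
  let f : latticeZ d ρ p →g torus d ρ p n := ⟨place x, torus_adj_place hρn x⟩
  obtain ⟨hreach, hdist⟩ := hv
  obtain ⟨w, hw⟩ := hreach.exists_walk_length_eq_dist
  show (torus d ρ p n).Reachable x (f v) ∧ (torus d ρ p n).dist x (f v) ≤ R
  rw [← place_zero x]
  refine ⟨⟨w.map f⟩, (SimpleGraph.dist_le (w.map f)).trans ?_⟩
  rwa [SimpleGraph.Walk.length_map, hw]

lemma place_injOn_refBall (R : ℕ) (hn : 2 * ρ * R < n) (x : Vtx d n) :
    Set.InjOn (place x) (refBall d ρ p R) := by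
  intro u hu w hw h
  by_contra hne
  obtain ⟨i, hi⟩ := Function.ne_iff.1 hne
  refine place_ne_place x hi ?_ h
  calc |w i - u i| ≤ |w i| + |u i| := abs_sub _ _
    _ ≤ ρ * R + ρ * R := add_le_add (abs_le_of_mem_refBall hw i) (abs_le_of_mem_refBall hu i)
    _ < n := by push_cast [← two_mul, ← mul_assoc]; exact_mod_cast hn

lemma torus_degree_le [NeZero n] [DecidableRel (torus d ρ p n).Adj] (y : Vtx d n) :
    (torus d ρ p n).degree y ≤ (2 * ρ + 1) ^ d := by
  classical
  have hsub : (torus d ρ p n).neighborFinset y ⊆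
      (Fintype.piFinset fun _ : Fin d => Finset.Icc (-(ρ : ℤ)) ρ).image (place y) := by
    intro w hw
    obtain ⟨-, z, hz, hnorm⟩ := (SimpleGraph.mem_neighborFinset _ _ _).1 hw
    refine Finset.mem_image.2 ⟨z, Fintype.mem_piFinset.2 fun i =>
      Finset.mem_Icc.2 (abs_le.1 (abs_le_of_lpNorm_le hnorm i)), funext fun i => ?_⟩
    simp [place, hz]
  rw [← SimpleGraph.card_neighborFinset_eq_degree]
  refine (Finset.card_le_card hsub).trans (Finset.card_image_le.trans (le_of_eq ?_))
  rw [Fintype.card_piFinset, Finset.prod_const, Finset.card_univ, Fintype.card_fin, Int.card_Icc]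
  congr 1
  omega

end TorusGeometry

section SpinFlip

open Finset

variable {V : Type*}

def edgeSpin (σ : V → Bool) : Sym2 V → ℝ :=
  Sym2.lift ⟨fun x y => spin (σ x) * spin (σ y), fun _ _ => mul_comm _ _⟩

lemma abs_edgeSpin_sub_le (σ τ : V → Bool) (e : Sym2 V) :
    |edgeSpin σ e - edgeSpin τ e| ≤ 2 := by
  induction e using Sym2.ind with
  | _ x y =>
    simp only [edgeSpin, Sym2.lift_mk]
    cases σ x <;> cases σ y <;> cases τ x <;> cases τ y <;> norm_num [spin]

lemma edgeSpin_eq_of_eqOn {σ τ : V → Bool} {e : Sym2 V} (h : ∀ y ∈ e, σ y = τ y) :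
    edgeSpin σ e = edgeSpin τ e := by
  induction e using Sym2.ind with
  | _ x y => simp [edgeSpin, h x (Sym2.mem_mk_left x y), h y (Sym2.mem_mk_right x y)]

variable [DecidableEq V]

def negOn (S : Finset V) (τ : V → Bool) : V → Bool :=
  fun y => if y ∈ S then false else τ y

lemma negOn_of_notMem {S : Finset V} {y : V} (hy : y ∉ S) (τ : V → Bool) :
    negOn S τ y = τ y :=
  if_neg hy

variable [Fintype V]

lemma sum_spin_sub_sum_spin_negOn (S : Finset V) (τ : V → Bool) :
    ∑ y, spin (τ y) - ∑ y, spin (negOn S τ y) = 2 * #{y ∈ S | τ y = true} := by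
  rw [← sum_sub_distrib, ← sum_subset (subset_univ S)
    fun y _ hy => by rw [negOn_of_notMem hy, sub_self], card_filter, Nat.cast_sum, mul_sum]
  refine sum_congr rfl fun y hy => ?_
  rw [negOn, if_pos hy]
  cases τ y <;> norm_num [spin]

variable (G : SimpleGraph V) [DecidableRel G.Adj]

lemma card_edges_meeting_le (S : Finset V) :
    #{e : G.edgeSet | ∃ y ∈ S, y ∈ (e : Sym2 V)} ≤ ∑ y ∈ S, G.degree y := by
  calc #{e : G.edgeSet | ∃ y ∈ S, y ∈ (e : Sym2 V)}
      ≤ #(S.biUnion fun y => G.incidenceFinset y) := by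
        refine card_le_card_of_injOn Subtype.val (fun e he => ?_) Subtype.val_injective.injOn
        obtain ⟨y, hyS, hye⟩ := (mem_filter.1 he).2
        exact mem_biUnion.2 ⟨y, hyS, (G.mem_incidenceFinset _ _).2 ⟨e.2, hye⟩⟩
    _ ≤ ∑ y ∈ S, #(G.incidenceFinset y) := card_biUnion_le
    _ = ∑ y ∈ S, G.degree y := by simp_rw [G.card_incidenceFinset_eq_degree]

lemma abs_tsum_edgeSpin_sub_le (S : Finset V) {σ τ : V → Bool} (h : ∀ y ∉ S, σ y = τ y) :
    |∑' e : G.edgeSet, edgeSpin σ e - ∑' e : G.edgeSet, edgeSpin τ e| ≤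
      2 * ∑ y ∈ S, G.degree y := by
  have hterm : ∀ e : G.edgeSet, |edgeSpin σ e - edgeSpin τ e| ≤
      if ∃ y ∈ S, y ∈ (e : Sym2 V) then 2 else 0 := by
    intro e
    split_ifs with hmeet
    · exact abs_edgeSpin_sub_le σ τ e
    · simp only [not_exists, not_and] at hmeet
      rw [edgeSpin_eq_of_eqOn fun y hy => h y fun hyS => hmeet y hyS hy, sub_self, abs_zero]
  rw [tsum_fintype, tsum_fintype, ← sum_sub_distrib]
  calc |∑ e : G.edgeSet, (edgeSpin σ e - edgeSpin τ e)|
      ≤ ∑ e : G.edgeSet, |edgeSpin σ e - edgeSpin τ e| := abs_sum_le_sum_abs _ _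
    _ ≤ ∑ e : G.edgeSet, if ∃ y ∈ S, y ∈ (e : Sym2 V) then (2 : ℝ) else 0 :=
        sum_le_sum fun e _ => hterm e
    _ = 2 * #{e : G.edgeSet | ∃ y ∈ S, y ∈ (e : Sym2 V)} := by
        rw [sum_ite, sum_const_zero, add_zero, sum_const, nsmul_eq_mul, mul_comm]
    _ ≤ 2 * ∑ y ∈ S, G.degree y := by
        gcongr
        exact_mod_cast card_edges_meeting_le G S

end SpinFlip

section Gibbs

variable {d ρ : ℕ} {p : ℝ≥0∞} [Fact (1 ≤ p)] {n : ℕ} [NeZero n] {a b : ℝ}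

lemma condProb_le_of_injOn {E : Set (Conf d n)} {W : Set (Vtx d n)} {σ : Conf d n} {F : ℝ}
    (hF : 0 ≤ F) (f : Conf d n → Conf d n)
    (hmaps : ∀ τ ∈ E ∩ agreeOn d n W σ, f τ ∈ agreeOn d n W σ)
    (hinj : Set.InjOn f (E ∩ agreeOn d n W σ))
    (hweight : ∀ τ ∈ E, weight d ρ p n a b τ ≤ F * weight d ρ p n a b (f τ)) :
    condProb d ρ p n a b E W σ ≤ F := by
  set A := agreeOn d n W σ
  have hZ : partZ d ρ p n a b ≠ 0 :=
    (Summable.of_finite.tsum_pos (fun _ => (Real.exp_pos _).le) σ (Real.exp_pos _)).ne'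
  have hA : 0 < ∑' τ : A, weight d ρ p n a b τ :=
    Summable.of_finite.tsum_pos (fun _ => (Real.exp_pos _).le) ⟨σ, fun _ _ => rfl⟩
      (Real.exp_pos _)
  have hle : ∑' τ : ↥(E ∩ A), weight d ρ p n a b τ ≤ ∑' τ : A, F * weight d ρ p n a b τ :=
    Summable.of_finite.tsum_le_tsum_of_inj (fun τ => ⟨f τ, hmaps τ τ.2⟩)
      (fun τ₁ τ₂ h => Subtype.ext (hinj τ₁.2 τ₂.2 (congrArg Subtype.val h)))
      (fun _ _ => mul_nonneg hF (Real.exp_pos _).le) (fun τ => hweight τ τ.2.1) .of_finite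
  rw [condProb, prob, prob, div_div_div_cancel_right₀ hZ, div_le_iff₀ hA, ← tsum_mul_left]
  exact hle

end Gibbs

section PlacedBall

open Finset

variable {d : ℕ} (ρ : ℕ) (p : ℝ≥0∞) [Fact (1 ≤ p)] {n : ℕ} (R : ℕ)

def placedBall (x : Vtx d n) : Finset (Vtx d n) :=
  univ.image fun v : refBall d ρ p R => place x v

variable {ρ p R}

lemma card_filter_placedBall (hn : 2 * ρ * R < n) {x : Vtx d n} {ζ : LocalConfig d ρ p R}
    {τ : Conf d n} (hτ : occursAt d ρ p R n ζ x τ) :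
    #{y ∈ placedBall ρ p R x | τ y = true} = kOf d ρ p R ζ := by
  rw [placedBall, filter_image, card_image_of_injOn
    fun v _ w _ h => Subtype.ext (place_injOn_refBall R hn x v.2 w.2 h)]
  simp only [show ∀ v, τ (place x v.1) = ζ v from hτ]
  rw [kOf, Set.ncard_eq_toFinset_card', Set.toFinset_ofPred]

lemma sum_degree_placedBall_le [NeZero n] [DecidableRel (torus d ρ p n).Adj] (x : Vtx d n) :
    ∑ y ∈ placedBall ρ p R x, (torus d ρ p n).degree y ≤
      Fintype.card (refBall d ρ p R) * (2 * ρ + 1) ^ d :=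
  calc ∑ y ∈ placedBall ρ p R x, (torus d ρ p n).degree y
      ≤ #(placedBall ρ p R x) * (2 * ρ + 1) ^ d := sum_le_card_nsmul _ _ _ fun y _ =>
        torus_degree_le y
    _ ≤ Fintype.card (refBall d ρ p R) * (2 * ρ + 1) ^ d := by
        gcongr
        exact card_image_le

lemma placedBall_subset_tball (hρn : ρ < n) (x : Vtx d n) :
    ↑(placedBall ρ p R x) ⊆ tball d ρ p n x R := by
  intro y hy
  obtain ⟨v, -, rfl⟩ := mem_image.1 hy
  exact place_mem_tball hρn x v.2

lemma negOn_placedBall_mem_agreeOn (hρn : ρ < n) {x : Vtx d n} {σ τ : Conf d n}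
    (hτ : τ ∈ agreeOn d n (boundary d ρ p n (tball d ρ p n x R)) σ) :
    negOn (placedBall ρ p R x) τ ∈ agreeOn d n (boundary d ρ p n (tball d ρ p n x R)) σ :=
  fun y hy => (negOn_of_notMem (fun h => hy.1 (placedBall_subset_tball hρn x h)) τ).trans
    (hτ y hy)

lemma negOn_placedBall_injOn (x : Vtx d n) (ζ : LocalConfig d ρ p R) :
    Set.InjOn (negOn (placedBall ρ p R x)) (event d ρ p R n ζ x) := by
  intro τ₁ hτ₁ τ₂ hτ₂ h
  funext y
  by_cases hy : y ∈ placedBall ρ p R x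
  · obtain ⟨v, -, rfl⟩ := mem_image.1 hy
    exact (hτ₁ v).trans (hτ₂ v).symm
  · simpa only [negOn_of_notMem hy] using congrFun h y

lemma hamiltonian_sub_negOn_le [NeZero n] (hn : 2 * ρ * (R + 1) < n) {x : Vtx d n}
    {ζ : LocalConfig d ρ p R} {τ : Conf d n} (hτ : occursAt d ρ p R n ζ x τ) (a b : ℝ) :
    hamiltonian d ρ p n a b τ - hamiltonian d ρ p n a b (negOn (placedBall ρ p R x) τ) ≤
      2 * a * kOf d ρ p R ζ + 2 * |b| * (Fintype.card (refBall d ρ p R) * (2 * ρ + 1) ^ d) := by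
  classical
  set τ' := negOn (placedBall ρ p R x) τ
  have hfield : ∑ y, spin (τ y) - ∑ y, spin (τ' y) = 2 * kOf d ρ p R ζ := by
    rw [sum_spin_sub_sum_spin_negOn, card_filter_placedBall (by nlinarith) hτ]
  have hpair : |pairSum d ρ p n τ - pairSum d ρ p n τ'| ≤
      2 * (Fintype.card (refBall d ρ p R) * (2 * ρ + 1) ^ d) :=
    (abs_tsum_edgeSpin_sub_le _ _ fun y hy => (negOn_of_notMem hy τ).symm).trans
      (by gcongr; exact_mod_cast sum_degree_placedBall_le x)
  have hb : b * (pairSum d ρ p n τ - pairSum d ρ p n τ') ≤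
      |b| * (2 * (Fintype.card (refBall d ρ p R) * (2 * ρ + 1) ^ d)) :=
    (le_abs_self _).trans ((abs_mul _ _).trans_le (by gcongr))
  simp only [hamiltonian, tsum_fintype] at hfield ⊢
  linear_combination a * hfield + hb

lemma condProb_event_le [NeZero n] (hn : 2 * ρ * (R + 1) < n) (x : Vtx d n)
    (ζ : LocalConfig d ρ p R) (σ : Conf d n) (a b : ℝ) :
    condProb d ρ p n a b (event d ρ p R n ζ x) (boundary d ρ p n (tball d ρ p n x R)) σ ≤
      Real.exp (2 * a * kOf d ρ p R ζ +
        2 * |b| * (Fintype.card (refBall d ρ p R) * (2 * ρ + 1) ^ d)) := by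
  have hρn : ρ < n := by nlinarith
  refine condProb_le_of_injOn (Real.exp_pos _).le _
    (fun τ hτ => negOn_placedBall_mem_agreeOn hρn hτ.2)
    ((negOn_placedBall_injOn x ζ).mono Set.inter_subset_left) fun τ hτ => ?_
  rw [weight, weight, ← Real.exp_add, Real.exp_le_exp]
  linarith [hamiltonian_sub_negOn_le hn hτ a b]

end PlacedBall

theorem stmt_2_general
    (d ρ r R : ℕ) (p : ℝ≥0∞) [Fact (1 ≤ p)]
    (η : LocalConfig d ρ p r) (hk : 1 ≤ kOf d ρ p r η)
    (ζ : LocalConfig d ρ p R)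
    (c : ℝ) (hc : 0 < c) (b : ℝ) (a : ℕ → ℝ)
    (ha : ∀ n : ℕ, 0 < n →
      Real.exp (2 * a n) = c * (n : ℝ) ^ (-(d : ℝ) / (kOf d ρ p r η : ℝ))) :
    ∃ M₁ : ℝ, 0 < M₁ ∧ ∀ n : ℕ, 2 * ρ * (R + 1) < n → ∀ x : Vtx d n, ∀ σ : Conf d n,
      (n : ℝ) ^ d *
          condProb d ρ p n (a n) b (event d ρ p R n ζ x)
            (boundary d ρ p n (tball d ρ p n x R)) σ
        ≤ M₁ * Real.exp (2 * a n * ((kOf d ρ p R ζ : ℝ) - (kOf d ρ p r η : ℝ))) := by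
  set k := kOf d ρ p r η
  set C := 2 * |b| * (Fintype.card (refBall d ρ p R) * (2 * ρ + 1) ^ d)
  refine ⟨c ^ k * Real.exp C, by positivity, fun n hn x σ => ?_⟩
  have hn0 : 0 < n := by omega
  have : NeZero n := ⟨hn0.ne'⟩
  have hk0 : (k : ℝ) ≠ 0 := Nat.cast_ne_zero.2 (Nat.one_le_iff_ne_zero.1 hk)
  have hscale : (n : ℝ) ^ d * Real.exp (2 * a n * k) = c ^ k := by
    rw [mul_comm (2 * a n), Real.exp_nat_mul, ha n hn0, mul_pow,
      ← Real.rpow_natCast (_ ^ _) k, ← Real.rpow_mul (Nat.cast_nonneg n),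
      div_mul_cancel₀ _ hk0, Real.rpow_neg (Nat.cast_nonneg n), Real.rpow_natCast]
    field_simp
  calc (n : ℝ) ^ d * condProb d ρ p n (a n) b (event d ρ p R n ζ x)
        (boundary d ρ p n (tball d ρ p n x R)) σ
      ≤ (n : ℝ) ^ d * Real.exp (2 * a n * kOf d ρ p R ζ + C) := by
        gcongr
        exact condProb_event_le hn x ζ σ (a n) b
    _ = c ^ k * Real.exp C * Real.exp (2 * a n * (kOf d ρ p R ζ - k)) := by
        rw [← hscale, mul_sub, Real.exp_sub, Real.exp_add]
        field_simp

/-- **Lemma (conditional probability bound).**  If `e^{2a(n)} = c n^{-d/k(η)}`, `R ≥ r` and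
`ζ ∈ D_R`, then there is `M₁ > 0` such that for all admissible `n`, all `x` and all `σ`,
`n^d μ_{a(n),b}(I_x^ζ = 1 | σ_{δB(x,R)}) ≤ M₁ e^{2a(n)(k(ζ) - k(η))}`. -/
theorem stmt_2
    (d ρ r R : ℕ) (hd : 1 ≤ d) (hρ : 1 ≤ ρ) (hrR : r ≤ R) (p : ℝ≥0∞) [Fact (1 ≤ p)]
    (η : LocalConfig d ρ p r) (hk : 1 ≤ kOf d ρ p r η)
    (ζ : LocalConfig d ρ p R)
    (c : ℝ) (hc : 0 < c) (b : ℝ) (a : ℕ → ℝ)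
    (ha : ∀ n : ℕ, 0 < n →
      Real.exp (2 * a n) = c * (n : ℝ) ^ (-(d : ℝ) / (kOf d ρ p r η : ℝ))) :
    ∃ M₁ : ℝ, 0 < M₁ ∧ ∀ n : ℕ, 2 * ρ * (R + 1) < n → ∀ x : Vtx d n, ∀ σ : Conf d n,
      (n : ℝ) ^ d *
          condProb d ρ p n (a n) b (event d ρ p R n ζ x)
            (boundary d ρ p n (tball d ρ p n x R)) σ
        ≤ M₁ * Real.exp (2 * a n * ((kOf d ρ p R ζ : ℝ) - (kOf d ρ p r η : ℝ))) :=
  stmt_2_general d ρ r R p η hk ζ c hc b a ha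

end

end Ising
end

section
/- Let η ∈ D_r with k(η) ≥ 1 and suppose e^{2a(n)} = c n^{−d/k(η)} for a fixed constant c > 0, with b a fixed real. Let R ≥ r be an integer and ζ ∈ D_R a local configuration of radius R. Then there exists a constant M_1 > 0 such that for all admissible n, the expected number of copies of ζ satisfies E_{a(n),b}[X_n(ζ)] ≤ M_1 e^{2a(n)(k(ζ) − k(η))}. -/
/-!
On the event that `ζ` occurs at `x`, setting its `k(ζ)` positive spins to `-1` is injective, and
it changes the Hamiltonian by `-2a k(ζ)` in the field term and by at most `2|b|` per edge at
those sites, of which there are at most `k(ζ) (2ρ+1)^d`. Hence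
`μ(I_x^ζ = 1) ≤ e^{2a k(ζ) + 2|b| k(ζ) (2ρ+1)^d}`, and summing over the `n^d` centres gives the
bound, because the scaling of `a` turns `n^d` into `c^{k(η)} e^{-2a k(η)}`.
-/

open scoped ENNReal BigOperators
open Filter

namespace Ising

noncomputable section

open scoped Finset

lemma abs_coord_le_lpNorm (p : ℝ≥0∞) [Fact (1 ≤ p)] {d : ℕ} (z : Fin d → ℤ) (i : Fin d) :
    |(z i : ℝ)| ≤ lpNorm p z := by
  simpa [lpNorm] using PiLp.norm_apply_le ((WithLp.equiv p (Fin d → ℝ)).symm fun i => (z i : ℝ)) i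

lemma abs_coord_le_of_lpNorm_le (p : ℝ≥0∞) [Fact (1 ≤ p)] {d ρ : ℕ} {z : Fin d → ℤ}
    (h : lpNorm p z ≤ ρ) (i : Fin d) : |z i| ≤ ρ := by
  exact_mod_cast (abs_coord_le_lpNorm p z i).trans h

lemma abs_sub_le_mul_length {d ρ : ℕ} {p : ℝ≥0∞} [Fact (1 ≤ p)] {u v : Fin d → ℤ}
    (w : (latticeZ d ρ p).Walk u v) (i : Fin d) : |v i - u i| ≤ ρ * w.length := by
  induction w with
  | nil => simp
  | @cons u u' v hadj w ih =>
    have hstep : |u' i - u i| ≤ ρ := abs_coord_le_of_lpNorm_le p hadj.2 i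
    calc |v i - u i| ≤ |v i - u' i| + |u' i - u i| := abs_sub_le _ _ _
      _ ≤ ρ * w.length + ρ := add_le_add ih hstep
      _ = ρ * (w.cons hadj).length := by rw [SimpleGraph.Walk.length_cons]; push_cast; ring

lemma abs_coord_le_of_mem_refBall {d ρ : ℕ} {p : ℝ≥0∞} [Fact (1 ≤ p)] {R : ℕ}
    {v : Fin d → ℤ} (hv : v ∈ refBall d ρ p R) (i : Fin d) : |v i| ≤ ρ * R := by
  obtain ⟨hreach, hdist⟩ := hv
  obtain ⟨w, hw⟩ := hreach.exists_walk_length_eq_dist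
  have hlen : (w.length : ℤ) ≤ R := by rw [hw]; exact_mod_cast hdist
  simpa using (abs_sub_le_mul_length w i).trans (mul_le_mul_of_nonneg_left hlen (by positivity))

lemma eq_of_intCast_eq_of_abs_le {n : ℕ} {M : ℤ} (hn : 2 * M < n) {x y : ℤ}
    (hx : |x| ≤ M) (hy : |y| ≤ M) (h : (x : ZMod n) = y) : x = y := by
  have hdvd : (n : ℤ) ∣ y - x := (ZMod.intCast_eq_intCast_iff_dvd_sub x y n).mp h
  have hlt : |y - x| < n := (abs_sub _ _).trans_lt (by linarith)
  linarith [Int.eq_zero_of_abs_lt_dvd hdvd hlt]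

lemma translate_injective {d ρ : ℕ} {p : ℝ≥0∞} [Fact (1 ≤ p)] {R n : ℕ} (hn : 2 * ρ * R < n)
    (x : Vtx d n) :
    Function.Injective fun v : ↥(refBall d ρ p R) => x + fun i => ((v.1 i : ZMod n)) := by
  intro v w h
  have hM : 2 * ((ρ : ℤ) * R) < n := by rw [← mul_assoc]; exact_mod_cast hn
  exact Subtype.ext <| funext fun i => eq_of_intCast_eq_of_abs_le hM
    (abs_coord_le_of_mem_refBall v.2 i) (abs_coord_le_of_mem_refBall w.2 i)
    (congrFun (add_left_cancel h) i)

section SpinSystem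

variable {V : Type*}

def spinProd (σ : V → Bool) : Sym2 V → ℝ :=
  Sym2.lift ⟨fun x y => spin (σ x) * spin (σ y), fun _ _ => mul_comm _ _⟩

lemma abs_spin (s : Bool) : |spin s| = 1 := by
  cases s <;> simp [spin]

lemma abs_spinProd_le_one (σ : V → Bool) (e : Sym2 V) : |spinProd σ e| ≤ 1 := by
  induction e using Sym2.ind
  simp [spinProd, abs_mul, abs_spin]

lemma spinProd_congr {σ τ : V → Bool} {e : Sym2 V} (h : ∀ y ∈ e, σ y = τ y) :
    spinProd σ e = spinProd τ e := by
  induction e using Sym2.ind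
  simp [spinProd, h _ (Sym2.mem_mk_left _ _), h _ (Sym2.mem_mk_right _ _)]

lemma abs_sum_spinProd_sub_le [Fintype V] [DecidableEq V] (G : SimpleGraph V)
    [DecidableRel G.Adj] (S : Finset V) {σ τ : V → Bool} (h : ∀ y ∉ S, σ y = τ y) :
    |∑ e ∈ G.edgeFinset, spinProd σ e - ∑ e ∈ G.edgeFinset, spinProd τ e|
      ≤ 2 * ∑ y ∈ S, G.degree y := by
  set T := {e ∈ G.edgeFinset | ∃ y ∈ S, y ∈ e}
  have hT : T ⊆ S.biUnion fun y => G.incidenceFinset y := by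
    intro e he
    obtain ⟨he, y, hyS, hye⟩ := Finset.mem_filter.mp he
    exact Finset.mem_biUnion.mpr
      ⟨y, hyS, by rw [SimpleGraph.incidenceFinset_eq_filter]; exact Finset.mem_filter.mpr ⟨he, hye⟩⟩
  have hcard : (#T : ℝ) ≤ ∑ y ∈ S, G.degree y := by
    have := (Finset.card_le_card hT).trans Finset.card_biUnion_le
    simp only [SimpleGraph.card_incidenceFinset_eq_degree] at this
    exact_mod_cast this
  have hsum : ∑ e ∈ G.edgeFinset, (spinProd σ e - spinProd τ e)
      = ∑ e ∈ T, (spinProd σ e - spinProd τ e) := by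
    refine (Finset.sum_filter_of_ne fun e _ hne => ?_).symm
    by_contra hout
    exact hne (sub_eq_zero.mpr (spinProd_congr fun y hy => h y fun hyS => hout ⟨y, hyS, hy⟩))
  calc |∑ e ∈ G.edgeFinset, spinProd σ e - ∑ e ∈ G.edgeFinset, spinProd τ e|
      = |∑ e ∈ T, (spinProd σ e - spinProd τ e)| := by rw [← Finset.sum_sub_distrib, hsum]
    _ ≤ ∑ _e ∈ T, (2 : ℝ) := by
        refine (Finset.abs_sum_le_sum_abs _ _).trans (Finset.sum_le_sum fun e _ => ?_)
        linarith [abs_sub (spinProd σ e) (spinProd τ e), abs_spinProd_le_one σ e,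
          abs_spinProd_le_one τ e]
    _ ≤ 2 * ∑ y ∈ S, G.degree y := by
        rw [Finset.sum_const, nsmul_eq_mul, mul_comm]
        exact mul_le_mul_of_nonneg_left hcard zero_le_two

variable [DecidableEq V]

def minusOn (S : Finset V) (σ : V → Bool) : V → Bool :=
  fun y => if y ∈ S then false else σ y

lemma minusOn_of_notMem {S : Finset V} (σ : V → Bool) {y : V} (hy : y ∉ S) :
    minusOn S σ y = σ y :=
  if_neg hy

lemma minusOn_injOn (S : Finset V) : Set.InjOn (minusOn S) {σ | ∀ y ∈ S, σ y = true} := by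
  intro σ hσ τ hτ h
  funext y
  by_cases hy : y ∈ S
  · rw [hσ y hy, hτ y hy]
  · rw [← minusOn_of_notMem σ hy, ← minusOn_of_notMem τ hy, h]

lemma sum_spin_eq_sum_spin_minusOn_add [Fintype V] {S : Finset V} {σ : V → Bool}
    (hσ : ∀ y ∈ S, σ y = true) :
    ∑ y, spin (σ y) = ∑ y, spin (minusOn S σ y) + 2 * #S := by
  have hdiff : ∀ y, spin (σ y) - spin (minusOn S σ y) = if y ∈ S then 2 else 0 := by
    intro y
    by_cases hy : y ∈ S
    · norm_num [minusOn, hy, hσ y hy, spin]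
    · simp [minusOn, hy]
  have := Finset.sum_congr rfl fun y (_ : y ∈ Finset.univ) => hdiff y
  simp only [Finset.sum_sub_distrib, Finset.sum_ite_mem, Finset.univ_inter, Finset.sum_const,
    nsmul_eq_mul] at this
  linarith

end SpinSystem

section Torus

variable {d ρ : ℕ} {p : ℝ≥0∞} [Fact (1 ≤ p)] {n : ℕ} [NeZero n]

lemma degree_torus_le (x : Vtx d n) [DecidableRel (torus d ρ p n).Adj] :
    (torus d ρ p n).degree x ≤ (2 * ρ + 1) ^ d := by
  set box := Fintype.piFinset fun _ : Fin d => Finset.Icc (-(ρ : ℤ)) ρ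
  have hsub : (torus d ρ p n).neighborFinset x
      ⊆ box.image fun z => x + fun i => ((z i : ZMod n)) := by
    intro y hy
    obtain ⟨-, z, hz, hzρ⟩ := (SimpleGraph.mem_neighborFinset _ _ _).mp hy
    refine Finset.mem_image.mpr ⟨z, Fintype.mem_piFinset.mpr fun i => ?_, ?_⟩
    · exact Finset.mem_Icc.mpr (abs_le.mp (abs_coord_le_of_lpNorm_le p hzρ i))
    · funext i
      simp [hz i]
  have hbox : #box = (2 * ρ + 1) ^ d := by
    simp only [box, Fintype.card_piFinset, Int.card_Icc, Finset.prod_const, Finset.card_univ,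
      Fintype.card_fin]
    congr 1
    omega
  rw [← SimpleGraph.card_neighborFinset_eq_degree, ← hbox]
  exact (Finset.card_le_card hsub).trans Finset.card_image_le

lemma abs_pairSum_sub_le (S : Finset (Vtx d n)) {σ τ : Conf d n} (h : ∀ y ∉ S, σ y = τ y) :
    |pairSum d ρ p n σ - pairSum d ρ p n τ| ≤ 2 * (#S * (2 * ρ + 1) ^ d) := by
  classical
  have hsum : ∀ σ : Conf d n,
      pairSum d ρ p n σ = ∑ e ∈ (torus d ρ p n).edgeFinset, spinProd σ e := by
    intro σ
    rw [pairSum, tsum_fintype]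
    exact (Finset.sum_subtype _ (fun _ => SimpleGraph.mem_edgeFinset) _).symm
  have hdeg : ∑ y ∈ S, (torus d ρ p n).degree y ≤ #S * (2 * ρ + 1) ^ d := by
    simpa using Finset.sum_le_sum fun y (_ : y ∈ S) => degree_torus_le (ρ := ρ) (p := p) y
  rw [hsum, hsum]
  refine (abs_sum_spinProd_sub_le _ S h).trans ?_
  gcongr
  exact_mod_cast hdeg

lemma hamiltonian_le_hamiltonian_minusOn (a b : ℝ) {S : Finset (Vtx d n)} {σ : Conf d n}
    (hσ : ∀ y ∈ S, σ y = true) :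
    hamiltonian d ρ p n a b σ ≤ hamiltonian d ρ p n a b (minusOn S σ)
      + (2 * a * #S + 2 * |b| * (#S * (2 * ρ + 1) ^ d)) := by
  have hpair := abs_pairSum_sub_le (ρ := ρ) (p := p) S fun y hy => (minusOn_of_notMem σ hy).symm
  have hb : b * (pairSum d ρ p n σ - pairSum d ρ p n (minusOn S σ))
      ≤ |b| * (2 * (#S * (2 * ρ + 1) ^ d)) :=
    (le_abs_self _).trans (abs_mul b _ ▸ mul_le_mul_of_nonneg_left hpair (abs_nonneg b))
  rw [hamiltonian, hamiltonian, tsum_fintype, tsum_fintype, sum_spin_eq_sum_spin_minusOn_add hσ]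
  linarith

end Torus

section Gibbs

variable {d ρ : ℕ} {p : ℝ≥0∞} [Fact (1 ≤ p)] {n : ℕ} {a b : ℝ}

lemma expect_occInd {r : ℕ} (η : LocalConfig d ρ p r) (x : Vtx d n) :
    expect d ρ p n a b (occInd d ρ p r n η x) = prob d ρ p n a b (event d ρ p r n η x) := by
  rw [expect, prob, tsum_subtype]
  congr 2 with σ
  by_cases h : occursAt d ρ p r n η x σ <;> simp [occInd, event, h]

variable [NeZero n]

lemma partZ_pos : 0 < partZ d ρ p n a b := by
  rw [partZ, tsum_fintype]
  exact Finset.sum_pos (fun σ _ => Real.exp_pos _) Finset.univ_nonempty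

lemma prob_eq_sum_div (A : Set (Conf d n)) [DecidablePred (· ∈ A)] :
    prob d ρ p n a b A = (∑ σ with σ ∈ A, weight d ρ p n a b σ) / partZ d ρ p n a b := by
  rw [prob, tsum_subtype, tsum_fintype, Finset.sum_filter]
  simp only [Set.indicator_apply]

lemma prob_mono {A B : Set (Conf d n)} (h : A ⊆ B) : prob d ρ p n a b A ≤ prob d ρ p n a b B := by
  rw [prob, prob, tsum_subtype, tsum_subtype, tsum_fintype, tsum_fintype]
  gcongr with σ
  · exact partZ_pos.le
  · exact (Real.exp_pos _).le

lemma expect_sum {ι : Type*} (s : Finset ι) (f : ι → Conf d n → ℝ) :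
    expect d ρ p n a b (fun σ => ∑ i ∈ s, f i σ) = ∑ i ∈ s, expect d ρ p n a b (f i) := by
  simp only [expect, tsum_fintype, Finset.mul_sum, ← Finset.sum_div]
  rw [Finset.sum_comm]

/-- `minusOn S` is injective on this event and lowers the Gibbs weight by at most the factor
on the right. -/
lemma prob_forall_eq_true_le (S : Finset (Vtx d n)) :
    prob d ρ p n a b {σ | ∀ y ∈ S, σ y = true}
      ≤ Real.exp (2 * a * #S + 2 * |b| * (#S * (2 * ρ + 1) ^ d)) := by
  classical
  set E : Finset (Conf d n) := {σ | ∀ y ∈ S, σ y = true}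
  set C := Real.exp (2 * a * #S + 2 * |b| * (#S * (2 * ρ + 1) ^ d))
  have hinj : Set.InjOn (minusOn S) E := fun σ hσ τ hτ =>
    minusOn_injOn S (Finset.mem_filter.mp hσ).2 (Finset.mem_filter.mp hτ).2
  rw [prob_eq_sum_div, div_le_iff₀ partZ_pos]
  calc ∑ σ ∈ E, weight d ρ p n a b σ
      ≤ ∑ σ ∈ E, C * weight d ρ p n a b (minusOn S σ) := by
        refine Finset.sum_le_sum fun σ hσ => ?_
        rw [weight, weight, ← Real.exp_add, add_comm]
        exact Real.exp_le_exp.mpr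
          (hamiltonian_le_hamiltonian_minusOn a b (Finset.mem_filter.mp hσ).2)
    _ = C * ∑ τ ∈ E.image (minusOn S), weight d ρ p n a b τ := by
        rw [Finset.sum_image hinj, Finset.mul_sum]
    _ ≤ C * partZ d ρ p n a b := by
        rw [partZ, tsum_fintype]
        exact mul_le_mul_of_nonneg_left
          (Finset.sum_le_univ_sum_of_nonneg fun τ => (Real.exp_pos _).le) (Real.exp_pos _).le

end Gibbs

section Occurrences

variable {d ρ : ℕ} {p : ℝ≥0∞} [Fact (1 ≤ p)] {R n : ℕ} [NeZero n] {a b : ℝ}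

lemma Xcount_eq_sum_occInd (ζ : LocalConfig d ρ p R) (σ : Conf d n) :
    (Xcount d ρ p R n ζ σ : ℝ) = ∑ x, occInd d ρ p R n ζ x σ := by
  classical
  rw [Xcount, Set.ncard_eq_toFinset_card', Set.toFinset_ofPred, Finset.card_filter]
  push_cast
  rfl

lemma prob_event_le (hn : 2 * ρ * R < n) (ζ : LocalConfig d ρ p R) (x : Vtx d n) :
    prob d ρ p n a b (event d ρ p R n ζ x)
      ≤ Real.exp (2 * a * kOf d ρ p R ζ + 2 * |b| * (kOf d ρ p R ζ * (2 * ρ + 1) ^ d)) := by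
  classical
  set S := (Set.toFinite ((fun v : ↥(refBall d ρ p R) => x + fun i => ((v.1 i : ZMod n))) ''
    {v | ζ v = true})).toFinset
  have hS : #S = kOf d ρ p R ζ := by
    rw [← Set.ncard_eq_toFinset_card, Set.ncard_image_of_injective _ (translate_injective hn x)]
    rfl
  have hsub : event d ρ p R n ζ x ⊆ {σ | ∀ y ∈ S, σ y = true} := by
    rintro σ hσ _ hy
    obtain ⟨v, hv, rfl⟩ := (Set.Finite.mem_toFinset _).mp hy
    exact (hσ v).trans hv
  simpa only [hS] using (prob_mono hsub).trans (prob_forall_eq_true_le S)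

lemma expect_Xcount_le (hn : 2 * ρ * R < n) (ζ : LocalConfig d ρ p R) :
    expect d ρ p n a b (fun σ => (Xcount d ρ p R n ζ σ : ℝ))
      ≤ n ^ d * Real.exp (2 * a * kOf d ρ p R ζ
        + 2 * |b| * (kOf d ρ p R ζ * (2 * ρ + 1) ^ d)) := by
  simp_rw [Xcount_eq_sum_occInd]
  rw [expect_sum]
  calc ∑ x, expect d ρ p n a b (occInd d ρ p R n ζ x)
      = ∑ x, prob d ρ p n a b (event d ρ p R n ζ x) := by simp_rw [expect_occInd]
    _ ≤ ∑ _x : Vtx d n, Real.exp (2 * a * kOf d ρ p R ζ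
        + 2 * |b| * (kOf d ρ p R ζ * (2 * ρ + 1) ^ d)) :=
        Finset.sum_le_sum fun x _ => prob_event_le hn ζ x
    _ = _ := by simp [Finset.card_univ, ZMod.card]

end Occurrences

lemma pow_eq_of_exp_eq {A c x : ℝ} (hx : 0 < x) {d k : ℕ} (hk : k ≠ 0)
    (h : Real.exp (2 * A) = c * x ^ (-(d : ℝ) / k)) :
    x ^ d = c ^ k * Real.exp (-(2 * A * k)) := by
  have hroot : (x ^ (-(d : ℝ) / k)) ^ k = (x ^ d)⁻¹ := by
    rw [← Real.rpow_natCast, ← Real.rpow_mul hx.le, div_mul_cancel₀ _ (Nat.cast_ne_zero.mpr hk),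
      Real.rpow_neg hx.le, Real.rpow_natCast]
  have hexp : Real.exp (2 * A * k) = c ^ k * (x ^ d)⁻¹ := by
    rw [← hroot, ← mul_pow, ← h, ← Real.exp_nat_mul, mul_comm]
  have hck : c ^ k ≠ 0 := by
    intro h0
    rw [h0, zero_mul] at hexp
    exact Real.exp_ne_zero _ hexp
  rw [Real.exp_neg, hexp]
  field_simp

theorem stmt_3_general
    (d ρ r R : ℕ) (p : ℝ≥0∞) [Fact (1 ≤ p)]
    (η : LocalConfig d ρ p r) (hk : 1 ≤ kOf d ρ p r η)
    (ζ : LocalConfig d ρ p R)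
    (c : ℝ) (hc : 0 < c) (b : ℝ) (a : ℕ → ℝ)
    (ha : ∀ n : ℕ, 0 < n →
      Real.exp (2 * a n) = c * (n : ℝ) ^ (-(d : ℝ) / (kOf d ρ p r η : ℝ))) :
    ∃ M₁ : ℝ, 0 < M₁ ∧ ∀ n : ℕ, 2 * ρ * (R + 1) < n →
      expect d ρ p n (a n) b (fun σ => (Xcount d ρ p R n ζ σ : ℝ))
        ≤ M₁ * Real.exp (2 * a n * ((kOf d ρ p R ζ : ℝ) - (kOf d ρ p r η : ℝ))) := by
  set kη := kOf d ρ p r η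
  set kζ := kOf d ρ p R ζ
  refine ⟨c ^ kη * Real.exp (2 * |b| * (kζ * (2 * ρ + 1) ^ d)), by positivity, fun n hn => ?_⟩
  have hn0 : 0 < n := (Nat.zero_le _).trans_lt hn
  have : NeZero n := ⟨hn0.ne'⟩
  have hnd := pow_eq_of_exp_eq (Nat.cast_pos.mpr hn0) (by omega) (ha n hn0)
  calc expect d ρ p n (a n) b (fun σ => (Xcount d ρ p R n ζ σ : ℝ))
      ≤ n ^ d * Real.exp (2 * a n * kζ + 2 * |b| * (kζ * (2 * ρ + 1) ^ d)) :=
        expect_Xcount_le ((Nat.mul_le_mul_left _ R.le_succ).trans_lt hn) ζ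
    _ = _ := by
        rw [hnd, mul_assoc, ← Real.exp_add, mul_assoc (c ^ kη), ← Real.exp_add]
        ring_nf

/-- **Lemma (expectation bound).**  If `e^{2a(n)} = c n^{-d/k(η)}`, `R ≥ r` and `ζ ∈ D_R`,
then there is `M₁ > 0` such that `E_{a(n),b}[X_n(ζ)] ≤ M₁ e^{2a(n)(k(ζ) - k(η))}` for all
admissible `n`. -/
theorem stmt_3
    (d ρ r R : ℕ) (hd : 1 ≤ d) (hρ : 1 ≤ ρ) (hrR : r ≤ R) (p : ℝ≥0∞) [Fact (1 ≤ p)]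
    (η : LocalConfig d ρ p r) (hk : 1 ≤ kOf d ρ p r η)
    (ζ : LocalConfig d ρ p R)
    (c : ℝ) (hc : 0 < c) (b : ℝ) (a : ℕ → ℝ)
    (ha : ∀ n : ℕ, 0 < n →
      Real.exp (2 * a n) = c * (n : ℝ) ^ (-(d : ℝ) / (kOf d ρ p r η : ℝ))) :
    ∃ M₁ : ℝ, 0 < M₁ ∧ ∀ n : ℕ, 2 * ρ * (R + 1) < n →
      expect d ρ p n (a n) b (fun σ => (Xcount d ρ p R n ζ σ : ℝ))
        ≤ M₁ * Real.exp (2 * a n * ((kOf d ρ p R ζ : ℝ) - (kOf d ρ p r η : ℝ))) :=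
  stmt_3_general d ρ r R p η hk ζ c hc b a ha

end

end Ising
end
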